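/- arXiv:1812.11882 — 2 statements merged into one kernel-verified Lean document; each statement's English description precedes it below -/
import Mathlib

section
/- Let H be a factorial commutative cancellative monoid and M a submonoid of H containing every unit of H. Then every element of M that is square-free in M is square-free in H, if and only if, every atom of M is square-free in H and any two non-associated atoms of M are relatively prime in H. -/
/-!
A factorial monoid is a decomposition monoid (every element is primal), so a product of pairwise
relatively prime square-free elements is square-free, and if `v * v ∣ a * b` with `a` square-free
then `v ∣ b`. Strict divisibility decreases the number of prime factors, so every non-unit of `M`
is a product of atoms of `M`.

If the atoms of a factorization of `a ∈ M` are square-free and pairwise relatively prime unless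
associated, and `a` is square-free in `M`, then no two of them are associated (two associated
factors would give `a = x ^ 2 * c` in `M`), so `a` is square-free in `H`.

Conversely, if two non-associated atoms `a`, `b` share a non-unit factor, then `a * b` is not
square-free in `H`, hence not in `M`: `a * b = e ^ 2 * c` with `e ∈ M` a non-unit, and an atom
`v ∣ e` of `M` divides both `a` and `b`, say `a = v * a₁`, `b = v * b₁` with `a₁ * b₁ ∈ M`.
Since `a` and `b` are atoms, `a₁` and `b₁` are both units or both non-units; in the second case
induction on the number of prime factors gives `a ~ v ~ b`.
-/

/-- Mathlib's `Prime` needs a `MonoidWithZero`. -/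
def IsPrimeElement {H : Type*} [CommMonoid H] (p : H) : Prop :=
  ¬IsUnit p ∧ ∀ b c : H, p ∣ b * c → p ∣ b ∨ p ∣ c

def IsFactorial (H : Type*) [CommMonoid H] : Prop :=
  ∀ a : H, IsUnit a ∨ ∃ l : Multiset H, (∀ p ∈ l, IsPrimeElement p) ∧ l.prod = a

section CommMonoid

variable {H : Type*} [CommMonoid H] {x d : H}

theorem IsPrimeElement.isPrimal {p : H} (hp : IsPrimeElement p) : IsPrimal p := by
  intro b c h
  rcases hp.2 b c h with hb | hc
  · exact ⟨p, 1, hb, one_dvd c, (mul_one p).symm⟩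
  · exact ⟨1, p, one_dvd b, hc, (one_mul p).symm⟩

theorem IsRelPrime.list_prod_right [DecompositionMonoid H] {l : List H}
    (h : ∀ y ∈ l, IsRelPrime x y) : IsRelPrime x l.prod := by
  induction l with
  | nil => exact isRelPrime_one_right
  | cons y t ih =>
    simp only [List.mem_cons, forall_eq_or_imp] at h
    exact h.1.mul_right (ih h.2)

theorem Squarefree.dvd_of_dvd_mul_self [DecompositionMonoid H] (hx : Squarefree x)
    (h : x ∣ d * d) : x ∣ d := by
  obtain ⟨a, b, ha, hb, rfl⟩ := exists_dvd_and_dvd_of_dvd_mul h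
  exact (IsRelPrime.of_squarefree_mul hx).mul_dvd ha hb

end CommMonoid

section CancelCommMonoid

variable {H : Type*} [CancelCommMonoid H] {x y : H}

theorem IsPrimeElement.irreducible {p : H} (hp : IsPrimeElement p) : Irreducible p := by
  refine ⟨hp.1, fun a b hab => ?_⟩
  rcases hp.2 a b (hab ▸ dvd_rfl) with ⟨w, rfl⟩ | ⟨w, rfl⟩
  · refine Or.inr (IsUnit.of_mul_eq_one_right w (mul_left_cancel (a := p) ?_))
    rw [mul_one, ← mul_assoc, ← hab]
  · refine Or.inl (IsUnit.of_mul_eq_one w (mul_left_cancel (a := p) ?_))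
    rw [mul_one, mul_left_comm, ← hab]

theorem isPrimal_mul {m n : H} (hm : IsPrimal m) (hn : IsPrimal n) : IsPrimal (m * n) := by
  intro b c h
  obtain ⟨a₁, a₂, ⟨b, rfl⟩, ⟨c, rfl⟩, rfl⟩ := hm (dvd_of_mul_right_dvd h)
  rw [mul_mul_mul_comm, (IsLeftRegular.all _).dvd_cancel_left] at h
  obtain ⟨a₁', a₂', h₁, h₂, rfl⟩ := hn h
  exact ⟨a₁ * a₁', a₂ * a₂', mul_dvd_mul_left _ h₁, mul_dvd_mul_left _ h₂, mul_mul_mul_comm _ _ _ _⟩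

theorem IsFactorial.decompositionMonoid (hfact : IsFactorial H) : DecompositionMonoid H := by
  refine ⟨fun a => ?_⟩
  rcases hfact a with hu | ⟨l, hl, rfl⟩
  · exact hu.isPrimal
  induction l using Multiset.induction with
  | empty => exact isUnit_one.isPrimal
  | cons p t ih =>
    simp only [Multiset.mem_cons, forall_eq_or_imp] at hl
    rw [Multiset.prod_cons]
    exact isPrimal_mul hl.1.isPrimal (ih hl.2)

theorem exists_le_associated_of_dvd_prod [DecompositionMonoid H] {l : Multiset H}
    (hl : ∀ p ∈ l, IsPrimeElement p) (h : x ∣ l.prod) :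
    ∃ l' ≤ l, Associated x l'.prod := by
  induction l using Multiset.induction generalizing x with
  | empty => exact ⟨0, le_rfl, associated_one_iff_isUnit.2 (isUnit_of_dvd_one h)⟩
  | cons p t ih =>
    simp only [Multiset.mem_cons, forall_eq_or_imp] at hl
    rw [Multiset.prod_cons] at h
    obtain ⟨x₁, x₂, hx₁, hx₂, rfl⟩ := exists_dvd_and_dvd_of_dvd_mul h
    obtain ⟨t', ht', hx₂t'⟩ := ih hl.2 hx₂
    rcases hl.1.irreducible.dvd_iff.1 hx₁ with hu | hp
    · refine ⟨t', ht'.trans (Multiset.le_cons_self t p), ?_⟩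
      exact (associated_unit_mul_left x₂ x₁ hu).trans hx₂t'
    · refine ⟨p ::ₘ t', Multiset.cons_le_cons p ht', ?_⟩
      rw [Multiset.prod_cons]
      exact hp.symm.mul_mul hx₂t'

noncomputable def factorLength (a : H) : ℕ :=
  sInf {n | ∃ l : Multiset H, Multiset.card l = n ∧ (∀ p ∈ l, IsPrimeElement p) ∧
    Associated l.prod a}

theorem exists_factorLength (hfact : IsFactorial H) (a : H) :
    ∃ l : Multiset H, Multiset.card l = factorLength a ∧ (∀ p ∈ l, IsPrimeElement p) ∧
      Associated l.prod a := by
  suffices h : {n | ∃ l : Multiset H, Multiset.card l = n ∧ (∀ p ∈ l, IsPrimeElement p) ∧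
      Associated l.prod a}.Nonempty from Nat.sInf_mem h
  rcases hfact a with hu | ⟨l, hl, rfl⟩
  · exact ⟨0, 0, rfl, by simp, by simpa using (associated_one_iff_isUnit.2 hu).symm⟩
  · exact ⟨_, l, rfl, hl, Associated.rfl⟩

theorem factorLength_lt_mul (hfact : IsFactorial H) (hy : ¬IsUnit y) :
    factorLength x < factorLength (x * y) := by
  have := hfact.decompositionMonoid
  obtain ⟨l, hcard, hl, hxy⟩ := exists_factorLength hfact (x * y)
  obtain ⟨l', hle, hx⟩ :=
    exists_le_associated_of_dvd_prod hl (hxy.dvd_iff_dvd_right.2 (dvd_mul_right x y))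
  have hlt : l' < l := by
    refine lt_of_le_of_ne hle ?_
    rintro rfl
    obtain ⟨u, hu⟩ := hx.trans hxy
    exact hy (mul_left_cancel hu ▸ u.isUnit)
  calc factorLength x ≤ Multiset.card l' :=
        Nat.sInf_le ⟨l', rfl, fun p hp => hl p (Multiset.mem_of_le hle hp), hx.symm⟩
    _ < Multiset.card l := Multiset.card_lt_card hlt
    _ = factorLength (x * y) := hcard

variable [DecompositionMonoid H]

theorem Squarefree.dvd_of_mul_self_dvd_mul_right {d : H} (hx : Squarefree x) (h : d * d ∣ x * y) :
    d ∣ y := by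
  obtain ⟨a, b, ha, hb, hab⟩ := exists_dvd_and_dvd_of_dvd_mul h
  obtain ⟨c, rfl⟩ := (hx.squarefree_of_dvd ha).dvd_of_dvd_mul_self (hab ▸ dvd_mul_right a b)
  have hb' : b = c * (a * c) := by
    refine mul_left_cancel (a := a) ?_
    rw [← hab]
    ac_rfl
  exact (hb' ▸ dvd_mul_left (a * c) c).trans hb

theorem Squarefree.mul_of_isRelPrime (hx : Squarefree x) (hy : Squarefree y)
    (hxy : IsRelPrime x y) : Squarefree (x * y) := fun _ hd =>
  hxy (hy.dvd_of_mul_self_dvd_mul_right (mul_comm x y ▸ hd))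
    (hx.dvd_of_mul_self_dvd_mul_right hd)

theorem squarefree_list_prod {l : List H} (hsq : ∀ x ∈ l, Squarefree x)
    (hrel : l.Pairwise IsRelPrime) : Squarefree l.prod := by
  induction l with
  | nil => exact squarefree_one
  | cons x t ih =>
    simp only [List.mem_cons, forall_eq_or_imp] at hsq
    rw [List.pairwise_cons] at hrel
    rw [List.prod_cons]
    exact hsq.1.mul_of_isRelPrime (ih hsq.2 hrel.2) (IsRelPrime.list_prod_right hrel.1)

end CancelCommMonoid

namespace Submonoid

section CommMonoid

variable {H : Type*} [CommMonoid H] {M : Submonoid H} {a b : H}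

def IsAtom (M : Submonoid H) (a : H) : Prop :=
  a ∈ M ∧ ¬IsUnit a ∧ ∀ b c : H, b ∈ M → c ∈ M → a = b * c → IsUnit b ∨ IsUnit c

def IsSquarefree (M : Submonoid H) (a : H) : Prop :=
  ¬∃ b c : H, b ∈ M ∧ c ∈ M ∧ ¬IsUnit b ∧ a = b ^ 2 * c

theorem IsAtom.isSquarefree (ha : M.IsAtom a) : M.IsSquarefree a := by
  rintro ⟨b, c, hb, hc, hbu, rfl⟩
  rcases ha.2.2 b (b * c) hb (M.mul_mem hb hc) (by rw [sq, mul_assoc]) with h | h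
  exacts [hbu h, hbu (isUnit_of_mul_isUnit_left h)]

theorem mem_of_isUnit_of_mul_mem (hunits : ∀ u : H, IsUnit u → u ∈ M) (ha : IsUnit a)
    (h : a * b ∈ M) : b ∈ M := by
  obtain ⟨u, rfl⟩ := ha
  simpa using M.mul_mem (hunits _ u⁻¹.isUnit) h

theorem not_associated_of_sublist (hunits : ∀ u : H, IsUnit u → u ∈ M) {l : List H}
    (hl : ∀ x ∈ l, x ∈ M) (hsq : M.IsSquarefree l.prod) {x y : H} (hx : ¬IsUnit x)
    (hxy : [x, y].Sublist l) : ¬Associated x y := by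
  rintro ⟨u, rfl⟩
  obtain ⟨r, hr⟩ := hxy.exists_perm_append
  have hr_mem : r.prod ∈ M :=
    M.list_prod_mem fun z hz => hl z (hr.mem_iff.2 (List.mem_append_right _ hz))
  refine hsq ⟨x, u * r.prod, hl x (hxy.subset List.mem_cons_self),
    M.mul_mem (hunits _ u.isUnit) hr_mem, hx, ?_⟩
  rw [hr.prod_eq, List.prod_append]
  simp only [List.prod_cons, List.prod_nil, mul_one, sq, mul_assoc]

end CommMonoid

variable {H : Type*} [CancelCommMonoid H] {M : Submonoid H} {a b : H}

theorem exists_atom_factorization (hfact : IsFactorial H) (ha : a ∈ M) (hau : ¬IsUnit a) :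
    ∃ l : List H, (∀ x ∈ l, M.IsAtom x) ∧ l.prod = a := by
  induction hn : factorLength a using Nat.strong_induction_on generalizing a with
  | _ n ih =>
  by_cases hat : M.IsAtom a
  · exact ⟨[a], by simpa using hat, List.prod_singleton⟩
  obtain ⟨b, c, hb, hc, rfl, hbu, hcu⟩ :
      ∃ b c, b ∈ M ∧ c ∈ M ∧ a = b * c ∧ ¬IsUnit b ∧ ¬IsUnit c := by
    simpa [IsAtom, ha, hau] using hat
  obtain ⟨lb, hlb, rfl⟩ := ih _ (hn ▸ factorLength_lt_mul hfact hcu) hb hbu rfl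
  obtain ⟨lc, hlc, rfl⟩ :=
    ih _ (hn ▸ mul_comm lb.prod _ ▸ factorLength_lt_mul hfact hbu) hc hcu rfl
  refine ⟨lb ++ lc, fun x hx => ?_, List.prod_append⟩
  exact (List.mem_append.1 hx).elim (hlb x) (hlc x)

theorem exists_atom_dvd (hfact : IsFactorial H) (ha : a ∈ M) (hau : ¬IsUnit a) :
    ∃ v c, M.IsAtom v ∧ c ∈ M ∧ a = v * c := by
  obtain ⟨_ | ⟨v, t⟩, hl, rfl⟩ := exists_atom_factorization hfact ha hau
  · exact absurd isUnit_one hau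
  simp only [List.mem_cons, forall_eq_or_imp] at hl
  exact ⟨v, t.prod, hl.1, M.list_prod_mem fun x hx => (hl.2 x hx).1, List.prod_cons⟩

theorem exists_common_atom_factor (hfact : IsFactorial H)
    (hL : ∀ a ∈ M, M.IsSquarefree a → Squarefree a) (ha : M.IsAtom a) (hb : M.IsAtom b)
    (hab : ¬IsRelPrime a b) : ∃ v a₁ b₁, M.IsAtom v ∧ a = v * a₁ ∧ b = v * b₁ ∧ a₁ * b₁ ∈ M := by
  have := hfact.decompositionMonoid
  obtain ⟨d, hda, hdb, hd⟩ : ∃ d, d ∣ a ∧ d ∣ b ∧ ¬IsUnit d := by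
    simpa [IsRelPrime] using hab
  have hnsq : ¬M.IsSquarefree (a * b) := fun h =>
    hd (hL _ (M.mul_mem ha.1 hb.1) h d (mul_dvd_mul hda hdb))
  obtain ⟨e, c, he, hc, heu, habe⟩ := not_not.1 hnsq
  obtain ⟨v, e', hv, he', rfl⟩ := exists_atom_dvd hfact he heu
  have habv : a * b = v * v * (e' ^ 2 * c) := by rw [habe, mul_pow, sq v, mul_assoc]
  have hvv : v * v ∣ a * b := habv ▸ dvd_mul_right _ _
  obtain ⟨a₁, rfl⟩ : v ∣ a :=
    (hL b hb.1 hb.isSquarefree).dvd_of_mul_self_dvd_mul_right (mul_comm a b ▸ hvv)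
  obtain ⟨b₁, rfl⟩ : v ∣ b := (hL _ ha.1 ha.isSquarefree).dvd_of_mul_self_dvd_mul_right hvv
  refine ⟨v, a₁, b₁, hv, rfl, rfl, ?_⟩
  rw [mul_mul_mul_comm, mul_left_cancel_iff] at habv
  exact habv ▸ M.mul_mem (pow_mem he' 2) hc

theorem IsAtom.associated_of_not_isRelPrime (hfact : IsFactorial H)
    (hunits : ∀ u : H, IsUnit u → u ∈ M) (hL : ∀ a ∈ M, M.IsSquarefree a → Squarefree a)
    (ha : M.IsAtom a) (hb : M.IsAtom b) (hab : ¬IsRelPrime a b) : Associated a b := by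
  induction hn : factorLength a + factorLength b using Nat.strong_induction_on
    generalizing a b with
  | _ n ih =>
  obtain ⟨v, a₁, b₁, hv, rfl, rfl, hmem⟩ := exists_common_atom_factor hfact hL ha hb hab
  have hcofactor {x y : H} (hy : M.IsAtom (v * y)) (hx : IsUnit x) (hxy : x * y ∈ M) :
      IsUnit y :=
    (hy.2.2 v y hv.1 (mem_of_isUnit_of_mul_mem hunits hx hxy) rfl).resolve_left hv.2.1
  by_cases ha₁ : IsUnit a₁
  · exact (associated_mul_unit_right v a₁ ha₁).symm.trans
      (associated_mul_unit_right v b₁ (hcofactor hb ha₁ hmem))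
  have hb₁ : ¬IsUnit b₁ := fun hb₁ => ha₁ (hcofactor ha hb₁ (mul_comm a₁ b₁ ▸ hmem))
  have hv_not_relPrime (x : H) : ¬IsRelPrime v (v * x) := fun h =>
    hv.2.1 (h dvd_rfl (dvd_mul_right v x))
  have := factorLength_lt_mul (x := v) hfact ha₁
  have := factorLength_lt_mul (x := v) hfact hb₁
  exact (ih _ (by omega) hv ha (hv_not_relPrime a₁) rfl).symm.trans
    (ih _ (by omega) hv hb (hv_not_relPrime b₁) rfl)

theorem squarefree_of_isSquarefree (hfact : IsFactorial H) (hunits : ∀ u : H, IsUnit u → u ∈ M)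
    (hatom : ∀ a, M.IsAtom a → Squarefree a)
    (hrel : ∀ a b, M.IsAtom a → M.IsAtom b → ¬Associated a b → IsRelPrime a b)
    (ha : a ∈ M) (hsq : M.IsSquarefree a) : Squarefree a := by
  have := hfact.decompositionMonoid
  by_cases hau : IsUnit a
  · exact hau.squarefree
  obtain ⟨l, hl, rfl⟩ := exists_atom_factorization hfact ha hau
  refine squarefree_list_prod (fun x hx => hatom x (hl x hx))
    (List.pairwise_iff_forall_sublist.2 fun {x y} hxy => ?_)
  have hx := hl x (hxy.subset List.mem_cons_self)
  refine hrel x y hx (hl y (hxy.subset (by simp))) ?_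
  exact not_associated_of_sublist hunits (fun z hz => (hl z hz).1) hsq hx.2.1 hxy

end Submonoid

theorem stmt_10 {H : Type*} [CancelCommMonoid H]
    (hfact : ∀ a : H, IsUnit a ∨ ∃ l : Multiset H, (∀ p ∈ l, ¬ IsUnit p ∧ ∀ b c : H, p ∣ b * c → p ∣ b ∨ p ∣ c) ∧ l.prod = a)
    (M : Submonoid H) (hunits : ∀ u : H, IsUnit u → u ∈ M) :
    (∀ a ∈ M, (¬ ∃ b c : H, b ∈ M ∧ c ∈ M ∧ ¬ IsUnit b ∧ a = b ^ 2 * c) →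
      Squarefree a) ↔
    ((∀ a ∈ M, ¬ IsUnit a →
        (∀ b c : H, b ∈ M → c ∈ M → a = b * c → IsUnit b ∨ IsUnit c) →
        Squarefree a) ∧
      (∀ a b : H, a ∈ M → b ∈ M → ¬ IsUnit a → ¬ IsUnit b →
        (∀ b' c : H, b' ∈ M → c ∈ M → a = b' * c → IsUnit b' ∨ IsUnit c) →
        (∀ b' c : H, b' ∈ M → c ∈ M → b = b' * c → IsUnit b' ∨ IsUnit c) →
        ¬ Associated a b → IsRelPrime a b)) := by
  have hfact : IsFactorial H := hfact
  constructor
  · intro hL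
    refine ⟨fun a ha hau hat => hL a ha (Submonoid.IsAtom.isSquarefree ⟨ha, hau, hat⟩), ?_⟩
    intro a b ha hb hau hbu hata hatb hab
    by_contra hrel
    exact hab (Submonoid.IsAtom.associated_of_not_isRelPrime hfact hunits hL
      ⟨ha, hau, hata⟩ ⟨hb, hbu, hatb⟩ hrel)
  · rintro ⟨hatom, hrel⟩ a ha hsq
    exact Submonoid.squarefree_of_isSquarefree hfact hunits
      (fun a h => hatom a h.1 h.2.1 h.2.2)
      (fun a b ha hb => hrel a b ha.1 hb.1 ha.2.1 hb.2.1 ha.2.2 hb.2.2) ha hsq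
end

section
/- Let H be a commutative cancellative decomposition monoid, and let s₁,…,sₙ and t₁,…,tₙ be square-free elements of H such that sᵢ and sⱼ are relatively prime for i ≠ j, and tᵢ and tⱼ are relatively prime for i ≠ j. If s₁·s₂²·s₃³·⋯·sₙⁿ is associated to t₁·t₂²·t₃³·⋯·tₙⁿ, then sᵢ is associated to tᵢ for every i = 1,…,n. -/
/-!
Peel off the index with the largest exponent `m + 1`. If `u` is square-free and
`u ^ (m + 1) ∣ x ^ (m + 1) * ∏ sᵢ ^ eᵢ` with every `eᵢ ≤ m`, `x` coprime to the `sᵢ`, and the `sᵢ`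
square-free and pairwise coprime, then primality splits `u` into pieces with
`a ^ (m + 1) ∣ x ^ (m + 1)` and `cᵢ ^ (m + 1) ∣ sᵢ ^ eᵢ`. The first gives `a ∣ x`. Each `cᵢ` is a
unit: writing `sᵢ = cᵢ * d`, cancelling `cᵢ ^ eᵢ` leaves `cᵢ ∣ d ^ eᵢ`, while `cᵢ` and `d` are
coprime because `sᵢ` is square-free. Hence `u ∣ x`; by symmetry the top factors `s` and `t` are
associated, and cancelling their powers lets us induct.
-/

section

open Finset Function

variable {M : Type*}

section CancelCommMonoid

variable [CancelCommMonoid M]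

theorem associated_of_dvd_dvd' {a b : M} (hab : a ∣ b) (hba : b ∣ a) : Associated a b := by
  obtain ⟨c, rfl⟩ := hab
  obtain ⟨d, hd⟩ := hba
  have hcd : c * d = 1 := mul_left_cancel (a := a) (by rw [← mul_assoc, ← hd, mul_one])
  exact ⟨(IsUnit.of_mul_eq_one d hcd).unit, rfl⟩

theorem Associated.of_mul_right' {a b c d : M} (h : Associated (a * b) (c * d))
    (hbd : Associated b d) : Associated a c := by
  obtain ⟨u, hu⟩ := h
  obtain ⟨v, rfl⟩ := hbd
  have hcancel : a * u = c * v := mul_right_cancel (b := b) <|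
    calc a * u * b = a * b * u := by ac_rfl
      _ = c * (b * v) := hu
      _ = c * v * b := by ac_rfl
  exact ⟨u * v⁻¹, by rw [Units.val_mul, ← mul_assoc, hcancel, Units.mul_inv_cancel_right]⟩

end CancelCommMonoid

section DecompositionMonoid

variable [CommMonoid M] [DecompositionMonoid M]

theorem Squarefree.dvd_of_dvd_pow {x y : M} {n : ℕ} (hx : Squarefree x) (h : x ∣ y ^ n) :
    x ∣ y :=
  (isRadical_iff_pow_one_lt 2 one_lt_two).2 (fun z hz => by
    obtain ⟨a, b, ha, hb, rfl⟩ := exists_dvd_and_dvd_of_dvd_mul (sq z ▸ hz)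
    exact (IsRelPrime.of_squarefree_mul hx).mul_dvd ha hb) n y h

theorem IsRelPrime.exists_pow_dvd_and_pow_dvd_of_pow_dvd_mul {x y u : M} {m : ℕ}
    (hxy : IsRelPrime x y) (hm : m ≠ 0) (h : u ^ m ∣ x * y) :
    ∃ a b, a ^ m ∣ x ∧ b ^ m ∣ y ∧ u = a * b := by
  obtain ⟨a, b, ha, hb, rfl⟩ := exists_dvd_and_dvd_of_dvd_mul ((dvd_pow_self u hm).trans h)
  rw [mul_pow] at h
  refine ⟨a, b, ?_, ?_, rfl⟩
  · exact (hxy.of_dvd_left ha).pow_left.dvd_of_dvd_mul_right ((dvd_mul_right _ _).trans h)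
  · exact (hxy.of_dvd_right hb).pow_right.symm.dvd_of_dvd_mul_left ((dvd_mul_left _ _).trans h)

end DecompositionMonoid

section CancelDecompositionMonoid

variable [CancelCommMonoid M] [DecompositionMonoid M]

theorem Squarefree.isUnit_of_pow_succ_dvd_pow {a x : M} {k : ℕ} (ha : Squarefree a)
    (hx : Squarefree x) (h : a ^ (k + 1) ∣ x ^ k) : IsUnit a := by
  obtain ⟨c, rfl⟩ := ha.dvd_of_dvd_pow ((dvd_pow_self a k.succ_ne_zero).trans h)
  obtain ⟨d, hd⟩ := h
  rw [mul_pow, pow_succ, mul_assoc] at hd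
  have hcd : c ^ k = a * d := mul_left_cancel hd
  exact (IsRelPrime.of_squarefree_mul hx).pow_right dvd_rfl ⟨d, hcd⟩

variable {ι : Type*} {S : Finset ι} {s : ι → M} {e : ι → ℕ} {m : ℕ}

theorem Squarefree.isUnit_of_pow_dvd_prod_pow {b : M} (hb : Squarefree b)
    (hs : ∀ i ∈ S, Squarefree (s i)) (hS : (S : Set ι).Pairwise (IsRelPrime on s))
    (he : ∀ i ∈ S, e i ≤ m) (h : b ^ (m + 1) ∣ ∏ i ∈ S, s i ^ e i) : IsUnit b := by
  induction S using Finset.cons_induction generalizing b with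
  | empty => exact isUnit_of_dvd_one ((dvd_pow_self b m.succ_ne_zero).trans (by simpa using h))
  | cons j S hj ih =>
    rw [prod_cons] at h
    have hcop : IsRelPrime (s j ^ e j) (∏ i ∈ S, s i ^ e i) :=
      IsRelPrime.prod_right fun i hi =>
        (hS (by simp) (by simp [hi]) (by rintro rfl; exact hj hi)).pow
    obtain ⟨a, c, ha, hc, rfl⟩ :=
      hcop.exists_pow_dvd_and_pow_dvd_of_pow_dvd_mul m.succ_ne_zero h
    have ha' : IsUnit a := hb.of_mul_left.isUnit_of_pow_succ_dvd_pow (hs j (by simp))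
      ((pow_dvd_pow a (Nat.succ_le_succ (he j (by simp)))).trans ha)
    have hc' : IsUnit c := ih hb.of_mul_right (fun i hi => hs i (by simp [hi]))
      (hS.mono (by simp)) (fun i hi => he i (by simp [hi])) hc
    exact ha'.mul hc'

theorem Squarefree.dvd_of_pow_dvd_pow_mul_prod_pow {u x : M} (hu : Squarefree u)
    (hs : ∀ i ∈ S, Squarefree (s i)) (hS : (S : Set ι).Pairwise (IsRelPrime on s))
    (he : ∀ i ∈ S, e i ≤ m) (hx : ∀ i ∈ S, IsRelPrime x (s i))
    (h : u ^ (m + 1) ∣ x ^ (m + 1) * ∏ i ∈ S, s i ^ e i) : u ∣ x := by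
  obtain ⟨a, c, ha, hc, rfl⟩ := (IsRelPrime.prod_right fun i hi => (hx i hi).pow)
    |>.exists_pow_dvd_and_pow_dvd_of_pow_dvd_mul m.succ_ne_zero h
  have hc' : IsUnit c := hu.of_mul_right.isUnit_of_pow_dvd_prod_pow hs hS he hc
  exact hc'.mul_right_dvd.2 <|
    hu.of_mul_left.dvd_of_dvd_pow ((dvd_pow_self a m.succ_ne_zero).trans ha)

theorem associated_of_associated_prod_pow [DecidableEq ι] {t : ι → M} (he : Set.InjOn e S)
    (he0 : ∀ i ∈ S, e i ≠ 0) (hs : ∀ i ∈ S, Squarefree (s i)) (ht : ∀ i ∈ S, Squarefree (t i))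
    (hsS : (S : Set ι).Pairwise (IsRelPrime on s)) (htS : (S : Set ι).Pairwise (IsRelPrime on t))
    (h : Associated (∏ i ∈ S, s i ^ e i) (∏ i ∈ S, t i ^ e i)) :
    ∀ i ∈ S, Associated (s i) (t i) := by
  induction S using Finset.induction_on_max_value e with
  | empty => simp
  | insert j S hj hmax ih =>
    obtain ⟨m, hm⟩ := Nat.exists_eq_succ_of_ne_zero (he0 j (mem_insert_self j S))
    have hne : ∀ i ∈ S, i ≠ j := fun i hi => by rintro rfl; exact hj hi
    have hle : ∀ i ∈ S, e i ≤ m := fun i hi => Nat.lt_succ_iff.1 <| hm ▸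
      (hmax i hi).lt_of_ne fun hij => hne i hi (he (by simp [hi]) (by simp) hij)
    have hcop {x : ι → M} (hxS : (↑(insert j S) : Set ι).Pairwise (IsRelPrime on x)) :
        ∀ i ∈ S, IsRelPrime (x j) (x i) := fun i hi =>
      hxS (by simp) (by simp [hi]) (hne i hi).symm
    rw [prod_insert hj, prod_insert hj, hm] at h
    have hts : t j ∣ s j := (ht j (by simp)).dvd_of_pow_dvd_pow_mul_prod_pow
      (fun i hi => hs i (by simp [hi])) (hsS.mono (by simp)) hle (hcop hsS)
      ((dvd_mul_right _ _).trans h.symm.dvd)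
    have hst : s j ∣ t j := (hs j (by simp)).dvd_of_pow_dvd_pow_mul_prod_pow
      (fun i hi => ht i (by simp [hi])) (htS.mono (by simp)) hle (hcop htS)
      ((dvd_mul_right _ _).trans h.dvd)
    have hj' : Associated (s j) (t j) := associated_of_dvd_dvd' hst hts
    have hS := ih (he.mono (by simp)) (fun i hi => he0 i (by simp [hi]))
      (fun i hi => hs i (by simp [hi])) (fun i hi => ht i (by simp [hi]))
      (hsS.mono (by simp)) (htS.mono (by simp))
      (Associated.of_mul_right' (by simpa only [mul_comm] using h) (hj'.pow_pow (n := m + 1)))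
    simpa [hj'] using hS

end CancelDecompositionMonoid

end

theorem stmt_16 {H : Type*} [CancelCommMonoid H] [DecompositionMonoid H] {n : ℕ}
    (s t : Fin n → H) (hs : ∀ i, Squarefree (s i)) (ht : ∀ i, Squarefree (t i))
    (hsrp : ∀ i j, i ≠ j → IsRelPrime (s i) (s j))
    (htrp : ∀ i j, i ≠ j → IsRelPrime (t i) (t j))
    (hassoc : Associated (∏ i, (s i) ^ (i.val + 1)) (∏ i, (t i) ^ (i.val + 1))) :
    ∀ i, Associated (s i) (t i) := fun i =>
  associated_of_associated_prod_pow (e := fun i : Fin n => i.val + 1)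
    (fun _ _ _ _ hij => Fin.ext (Nat.succ_injective hij)) (fun _ _ => Nat.succ_ne_zero _)
    (fun i _ => hs i) (fun i _ => ht i) (fun i _ j _ => hsrp i j) (fun i _ j _ => htrp i j)
    hassoc i (Finset.mem_univ i)
end
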